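/- arXiv:1404.6429 — 4 statements merged into one kernel-verified Lean document; each statement's English description precedes it below -/
import Mathlib

section
/- Let 0 < R < 1/2 and β real. With Φ̂(u) = [((2R−|u|)/2)(1/(16R²) − β²) cos(πu/(2R)) − (1/π)(1/(16R) + β²R) sin(π|u|/(2R))]·1_{[−2R,2R]}(u), one has ∫_ℝ |u| Φ̂(u)² du = (768R⁴β⁴ + 3 + 288β²R² + π² − 32β²R²π² + 256R⁴β⁴π²)/(768π²). -/
open Real MeasureTheory Set

set_option maxHeartbeats 1000000

private lemma hasDerivAt_master (c A0 A1 A2 A3 A4 B0 B1 B2 B3 G0 G1 G2 x : ℝ) :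
    HasDerivAt (fun u : ℝ =>
        (A0 + A1*u + A2*u^2 + A3*u^3 + A4*u^4)
        + (B0 + B1*u + B2*u^2 + B3*u^3) * (Real.sin (c*u) * Real.cos (c*u))
        + (G0 + G1*u + G2*u^2) * Real.cos (c*u)^2)
      ((A1 + 2*A2*x + 3*A3*x^2 + 4*A4*x^3)
        + ((B1 + 2*B2*x + 3*B3*x^2) * (Real.sin (c*x) * Real.cos (c*x))
          + (B0 + B1*x + B2*x^2 + B3*x^3) * c * (Real.cos (c*x)^2 - Real.sin (c*x)^2))
        + ((G1 + 2*G2*x) * Real.cos (c*x)^2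
          - (G0 + G1*x + G2*x^2) * (2*c) * (Real.sin (c*x) * Real.cos (c*x)))) x := by
  have hu : HasDerivAt (fun u : ℝ => c * u) c x := by
    simpa using (hasDerivAt_id x).const_mul c
  have hsin : HasDerivAt (fun u : ℝ => Real.sin (c*u)) (Real.cos (c*x) * c) x :=
    (Real.hasDerivAt_sin (c*x)).comp x hu
  have hcos : HasDerivAt (fun u : ℝ => Real.cos (c*u)) (-Real.sin (c*x) * c) x :=
    (Real.hasDerivAt_cos (c*x)).comp x hu
  have hP : HasDerivAt (fun u : ℝ => A0 + A1*u + A2*u^2 + A3*u^3 + A4*u^4)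
      (A1 + 2*A2*x + 3*A3*x^2 + 4*A4*x^3) x := by
    have h := ((((hasDerivAt_const x A0).add ((hasDerivAt_id x).const_mul A1)).add
      ((hasDerivAt_pow 2 x).const_mul A2)).add ((hasDerivAt_pow 3 x).const_mul A3)).add
      ((hasDerivAt_pow 4 x).const_mul A4)
    refine h.congr_deriv ?_
    push_cast; ring
  have hB : HasDerivAt (fun u : ℝ => B0 + B1*u + B2*u^2 + B3*u^3)
      (B1 + 2*B2*x + 3*B3*x^2) x := by
    have h := (((hasDerivAt_const x B0).add ((hasDerivAt_id x).const_mul B1)).add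
      ((hasDerivAt_pow 2 x).const_mul B2)).add ((hasDerivAt_pow 3 x).const_mul B3)
    refine h.congr_deriv ?_
    push_cast; ring
  have hG : HasDerivAt (fun u : ℝ => G0 + G1*u + G2*u^2) (G1 + 2*G2*x) x := by
    have h := ((hasDerivAt_const x G0).add ((hasDerivAt_id x).const_mul G1)).add
      ((hasDerivAt_pow 2 x).const_mul G2)
    refine h.congr_deriv ?_
    push_cast; ring
  have h := (hP.add (hB.mul (hsin.mul hcos))).add (hG.mul (hcos.pow 2))
  refine h.congr_deriv ?_
  simp only [Pi.mul_apply, Pi.pow_apply]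
  push_cast; ring

private lemma half_integral (R a b cc : ℝ) (hR : 0 < R) (hcc : 0 < cc)
    (hpi : cc * (2*R) = Real.pi) :
    ∫ x in (0:ℝ)..(2*R), x * (a*(2*R - x)*Real.cos (cc*x) - b*Real.sin (cc*x))^2
      = 2*a^2*R^4/3 - a^2*R^2/(2*cc^2) + b^2*R^2 := by
  have hcne : cc ≠ 0 := ne_of_gt hcc
  have key : ∀ x ∈ Set.uIcc (0:ℝ) (2*R),
      HasDerivAt (fun u : ℝ =>
        ((-(a^2*R^2/cc^2 - 3*a^2/(8*cc^4) + a*b/(2*cc^3) - b^2/(4*cc^2))/2)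
          + (-(-2*a^2*R/cc^2 + 2*a*b*R/cc)/2)*u
          + (a^2*R^2 + b^2/4 - (3*a^2/(4*cc^2) - a*b/cc)/2)*u^2
          + (-2*a^2*R/3)*u^3 + (a^2/8)*u^4)
        + ((a^2*R/cc^3 - a*b*R/cc^2)
          + (2*a^2*R^2/cc - 3*a^2/(4*cc^3) + a*b/cc^2 - b^2/(2*cc))*u
          + (-2*a^2*R/cc)*u^2 + (a^2/(2*cc))*u^3) * (Real.sin (cc*u) * Real.cos (cc*u))
        + ((a^2*R^2/cc^2 - 3*a^2/(8*cc^4) + a*b/(2*cc^3) - b^2/(4*cc^2))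
          + (-2*a^2*R/cc^2 + 2*a*b*R/cc)*u
          + (3*a^2/(4*cc^2) - a*b/cc)*u^2) * Real.cos (cc*u)^2)
      (x * (a*(2*R - x)*Real.cos (cc*x) - b*Real.sin (cc*x))^2) x := by
    intro x _
    have H := hasDerivAt_master cc
      (-(a^2*R^2/cc^2 - 3*a^2/(8*cc^4) + a*b/(2*cc^3) - b^2/(4*cc^2))/2)
      (-(-2*a^2*R/cc^2 + 2*a*b*R/cc)/2)
      (a^2*R^2 + b^2/4 - (3*a^2/(4*cc^2) - a*b/cc)/2)
      (-2*a^2*R/3) (a^2/8)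
      (a^2*R/cc^3 - a*b*R/cc^2)
      (2*a^2*R^2/cc - 3*a^2/(4*cc^3) + a*b/cc^2 - b^2/(2*cc))
      (-2*a^2*R/cc) (a^2/(2*cc))
      (a^2*R^2/cc^2 - 3*a^2/(8*cc^4) + a*b/(2*cc^3) - b^2/(4*cc^2))
      (-2*a^2*R/cc^2 + 2*a*b*R/cc)
      (3*a^2/(4*cc^2) - a*b/cc) x
    convert H using 1
    have hSC := Real.sin_sq_add_cos_sq (cc*x)
    have h1 : ((a^2*R/cc^3 - a*b*R/cc^2)
          + (2*a^2*R^2/cc - 3*a^2/(4*cc^3) + a*b/cc^2 - b^2/(2*cc))*x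
          + (-2*a^2*R/cc)*x^2 + (a^2/(2*cc))*x^3) * cc
        = ((a^2*R/cc^2 - a*b*R/cc)
            + (2*a^2*R^2 - 3*a^2/(4*cc^2) + a*b/cc - b^2/2)*x
            + (-2*a^2*R)*x^2 + (a^2/2)*x^3) := by
      field_simp
    have h2 : ((a^2*R^2/cc^2 - 3*a^2/(8*cc^4) + a*b/(2*cc^3) - b^2/(4*cc^2))
          + (-2*a^2*R/cc^2 + 2*a*b*R/cc)*x
          + (3*a^2/(4*cc^2) - a*b/cc)*x^2) * (2*cc)
        = ((2*a^2*R^2/cc - 3*a^2/(4*cc^3) + a*b/cc^2 - b^2/(2*cc))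
            + (-4*a^2*R/cc + 4*a*b*R)*x + (3*a^2/(2*cc) - 2*a*b)*x^2) := by
      field_simp
      ring
    rw [h1, h2]
    linear_combination ((a^2*R/cc^2 - a*b*R/cc)
        + x*(2*a^2*R^2 - 3*a^2/(4*cc^2) + a*b/cc + b^2/2)
        - 2*a^2*R*x^2 + a^2/2*x^3) * hSC
  have hcont : IntervalIntegrable
      (fun x : ℝ => x * (a*(2*R - x)*Real.cos (cc*x) - b*Real.sin (cc*x))^2)
      MeasureTheory.volume 0 (2*R) := by
    apply Continuous.intervalIntegrable
    fun_prop
  rw [intervalIntegral.integral_eq_sub_of_hasDerivAt key hcont]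
  simp only [hpi, mul_zero, Real.sin_pi, Real.cos_pi, Real.sin_zero, Real.cos_zero]
  field_simp
  ring

/-- Explicit computation of `∫ |u| Φ̂(u)² du` for the explicit function `Φ̂`
supported on `[-2R, 2R]`. -/
theorem integral_abs_mul_sq_phiHat (R β : ℝ) (hR : 0 < R) (hR' : R < 1 / 2)
    (Φhat : ℝ → ℝ)
    (hΦhat : ∀ u : ℝ, Φhat u = Set.indicator (Set.Icc (-(2 * R)) (2 * R))
      (fun u => ((2 * R - |u|) / 2) * (1 / (16 * R ^ 2) - β ^ 2) *
          Real.cos (Real.pi * u / (2 * R))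
        - (1 / Real.pi) * (1 / (16 * R) + β ^ 2 * R) *
          Real.sin (Real.pi * |u| / (2 * R))) u) :
    ∫ u : ℝ, |u| * (Φhat u) ^ 2 =
      (768 * R ^ 4 * β ^ 4 + 3 + 288 * β ^ 2 * R ^ 2 + Real.pi ^ 2
        - 32 * β ^ 2 * R ^ 2 * Real.pi ^ 2 + 256 * R ^ 4 * β ^ 4 * Real.pi ^ 2)
        / (768 * Real.pi ^ 2) := by
  have hπ : (0:ℝ) < Real.pi := Real.pi_pos
  have hRne : R ≠ 0 := ne_of_gt hR
  have h2R : (0:ℝ) < 2*R := by linarith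
  set g0 : ℝ → ℝ := fun u => ((2 * R - |u|) / 2) * (1 / (16 * R ^ 2) - β ^ 2) *
          Real.cos (Real.pi * u / (2 * R))
        - (1 / Real.pi) * (1 / (16 * R) + β ^ 2 * R) *
          Real.sin (Real.pi * |u| / (2 * R)) with hg0
  have step1 : (fun u : ℝ => |u| * (Φhat u)^2)
      = fun u => Set.indicator (Set.Icc (-(2*R)) (2*R)) (fun u => |u| * (g0 u)^2) u := by
    funext u
    rw [hΦhat u]
    by_cases h : u ∈ Set.Icc (-(2*R)) (2*R)
    · simp [Set.indicator_of_mem h]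
    · simp [Set.indicator_of_notMem h]
  rw [show (∫ u : ℝ, |u| * (Φhat u)^2)
      = ∫ u : ℝ, Set.indicator (Set.Icc (-(2*R)) (2*R)) (fun u => |u| * (g0 u)^2) u by
    rw [← step1]]
  rw [MeasureTheory.integral_indicator measurableSet_Icc,
    MeasureTheory.integral_Icc_eq_integral_Ioc,
    ← intervalIntegral.integral_of_le (by linarith : -(2*R) ≤ 2*R)]
  have hcont0 : Continuous fun u : ℝ => |u| * (g0 u)^2 := by
    rw [hg0]; fun_prop
  rw [← intervalIntegral.integral_add_adjacent_intervals
    (hcont0.intervalIntegrable (-(2*R)) 0) (hcont0.intervalIntegrable 0 (2*R))]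
  have heven : ∀ u : ℝ, |(-u)| * (g0 (-u))^2 = |u| * (g0 u)^2 := by
    intro u
    have h1 : g0 (-u) = g0 u := by
      rw [hg0]
      simp only [abs_neg]
      rw [show Real.pi * (-u) / (2*R) = -(Real.pi * u / (2*R)) by ring, Real.cos_neg]
    rw [abs_neg, h1]
  have hneg : (∫ x in (-(2*R))..(0:ℝ), |x| * (g0 x)^2)
      = ∫ x in (0:ℝ)..(2*R), |x| * (g0 x)^2 := by
    have h := intervalIntegral.integral_comp_neg (a := (0:ℝ)) (b := 2*R)
      (fun x => |x| * (g0 x)^2)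
    simp only [neg_zero] at h
    rw [← h]
    exact intervalIntegral.integral_congr fun x _ => heven x
  rw [hneg]
  have habs : (∫ x in (0:ℝ)..(2*R), |x| * (g0 x)^2)
      = ∫ x in (0:ℝ)..(2*R), x * (((1/(16*R^2) - β^2)/2)*(2*R - x)
          * Real.cos ((Real.pi/(2*R))*x)
        - ((1/(16*R) + β^2*R)/Real.pi) * Real.sin ((Real.pi/(2*R))*x))^2 := by
    apply intervalIntegral.integral_congr
    intro x hx
    rw [Set.uIcc_of_le (by linarith : (0:ℝ) ≤ 2*R)] at hx
    rw [hg0]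
    simp only
    rw [abs_of_nonneg hx.1, show Real.pi * x / (2*R) = Real.pi/(2*R)*x by ring]
    ring
  rw [habs, half_integral R ((1/(16*R^2) - β^2)/2) ((1/(16*R) + β^2*R)/Real.pi)
    (Real.pi/(2*R)) hR (by positivity) (by field_simp)]
  field_simp
  ring
end

section
/- Let 0 < R ≤ 1/2 and σ ∈ {−1, +1} with σ = +1 (orthogonal cases). For any nonzero square-summable sequence (c_n)_{n odd}, define B(c) = (∑* n² c_n²) / (∑* c_n² + σ·(8R/π²)·(∑* ((−1)^{(n−1)/2}/n)·c_n)²), where ∑* runs over odd n ≥ 1. Then B(c) > 1/(1+R), and the infimum of B over all admissible nonzero c is at most 1/(1 + 8R/π²). -/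
open Real

lemma telescope_summable : Summable fun k : ℕ => (1 : ℝ) / ((k + 1) * (k + 2)) := by
  apply Summable.of_nonneg_of_le (fun k => by positivity) (fun k => ?_)
    ((Real.summable_one_div_nat_pow.mpr one_lt_two).comp_injective (add_left_injective 1))
  have h2 : (0 : ℝ) < ((k : ℝ) + 1) ^ 2 := by positivity
  have h1 : ((k : ℝ) + 1) ^ 2 ≤ ((k : ℝ) + 1) * ((k : ℝ) + 2) := by
    nlinarith [Nat.cast_nonneg (α := ℝ) k]
  calc (1 : ℝ) / ((k + 1) * (k + 2)) ≤ 1 / ((k : ℝ) + 1) ^ 2 :=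
        one_div_le_one_div_of_le h2 h1
    _ = 1 / ((k + 1 : ℕ) : ℝ) ^ 2 := by push_cast; ring_nf
    _ = (fun n : ℕ => 1 / (n : ℝ) ^ 2) ((fun m => m + 1) k) := rfl

/-- Telescoping sum: `∑ 1/((k+1)(k+2)) = 1`. -/
lemma telescope_tsum : ∑' k : ℕ, (1 : ℝ) / ((k + 1) * (k + 2)) = 1 := by
  have hsum := telescope_summable
  have hpartial : ∀ n : ℕ, ∑ i ∈ Finset.range n, (1 : ℝ) / ((i + 1) * (i + 2))
      = 1 - 1 / (n + 1) := by
    intro n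
    induction n with
    | zero => simp
    | succ n ih =>
      rw [Finset.sum_range_succ, ih]
      have h1 : ((n : ℝ) + 1) ≠ 0 := by positivity
      have h2 : ((n : ℝ) + 2) ≠ 0 := by positivity
      push_cast
      field_simp
      ring
  have htend := hsum.hasSum.tendsto_sum_nat
  have htend' : Filter.Tendsto (fun n : ℕ => (1 : ℝ) - 1 / (n + 1)) Filter.atTop (nhds 1) := by
    have : Filter.Tendsto (fun n : ℕ => 1 / ((n : ℝ) + 1)) Filter.atTop (nhds 0) :=
      tendsto_one_div_add_atTop_nhds_zero_nat
    simpa using Filter.Tendsto.const_sub 1 this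
  exact tendsto_nhds_unique (by simpa only [hpartial] using htend) htend'

lemma summable_inv_odd_pow4 : Summable fun k : ℕ => (1 : ℝ) / (2 * k + 1) ^ 4 := by
  apply Summable.of_nonneg_of_le (fun k => by positivity) (fun k => ?_)
    ((Real.summable_one_div_nat_pow.mpr one_lt_two).comp_injective (add_left_injective 1))
  have h2 : (0 : ℝ) < ((k : ℝ) + 1) ^ 2 := by positivity
  have h1 : ((k : ℝ) + 1) ^ 2 ≤ (2 * k + 1) ^ 4 := by
    nlinarith [Nat.cast_nonneg (α := ℝ) k, sq_nonneg ((k : ℝ)),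
      pow_nonneg (Nat.cast_nonneg (α := ℝ) k) 3, pow_nonneg (Nat.cast_nonneg (α := ℝ) k) 4]
  calc (1 : ℝ) / (2 * k + 1) ^ 4 ≤ 1 / ((k : ℝ) + 1) ^ 2 := one_div_le_one_div_of_le h2 h1
    _ = 1 / ((k + 1 : ℕ) : ℝ) ^ 2 := by push_cast; ring_nf
    _ = (fun n : ℕ => 1 / (n : ℝ) ^ 2) ((fun m => m + 1) k) := rfl

/-- `∑ 1/(2k+1)^4 ≤ 37/36`. -/
lemma tsum_inv_odd_pow4_le : ∑' k : ℕ, (1 : ℝ) / (2 * k + 1) ^ 4 ≤ 37 / 36 := by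
  have hsum := summable_inv_odd_pow4
  rw [Summable.tsum_eq_zero_add hsum]
  have h0 : (1 : ℝ) / (2 * ((0:ℕ):ℝ) + 1) ^ 4 = 1 := by norm_num
  have hle : ∀ k : ℕ, (1 : ℝ) / (2 * ((k:ℝ) + 1) + 1) ^ 4
      ≤ (1/36) * (1 / (((k:ℝ) + 1) * ((k:ℝ) + 2))) := by
    intro k
    have hk : (0 : ℝ) ≤ k := Nat.cast_nonneg k
    rw [show (1/36 : ℝ) * (1 / (((k:ℝ) + 1) * ((k:ℝ) + 2)))
        = 1 / (36 * (((k:ℝ) + 1) * ((k:ℝ) + 2))) by rw [div_mul_div_comm]; norm_num]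
    exact one_div_le_one_div_of_le (by positivity)
      (by nlinarith [sq_nonneg ((k : ℝ)), pow_nonneg hk 3, pow_nonneg hk 4])
  have htail : ∑' k : ℕ, (1 : ℝ) / (2 * ((k:ℝ) + 1) + 1) ^ 4 ≤ 1 / 36 := by
    have hsumtail : Summable fun k : ℕ => (1 : ℝ) / (2 * ((k:ℝ) + 1) + 1) ^ 4 := by
      have h := hsum.comp_injective (add_left_injective 1)
      exact h.congr (fun k => by simp only [Function.comp_apply]; push_cast; ring_nf)
    calc ∑' k : ℕ, (1 : ℝ) / (2 * ((k:ℝ) + 1) + 1) ^ 4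
        ≤ ∑' k : ℕ, (1/36 : ℝ) * (1 / (((k:ℝ) + 1) * ((k:ℝ) + 2))) :=
          Summable.tsum_le_tsum hle hsumtail (telescope_summable.mul_left _)
      _ = (1/36) * ∑' k : ℕ, (1 : ℝ) / (((k:ℝ) + 1) * ((k:ℝ) + 2)) := tsum_mul_left
      _ = 1/36 := by rw [telescope_tsum]; norm_num
  push_cast
  push_cast at h0
  linarith [h0, htail]

/-- Cauchy–Schwarz for tsums over ℕ. -/
lemma tsum_cauchy_schwarz {u v : ℕ → ℝ} (hu : Summable fun k => u k ^ 2)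
    (hv : Summable fun k => v k ^ 2) :
    (∑' k : ℕ, u k * v k) ^ 2 ≤ (∑' k : ℕ, u k ^ 2) * (∑' k : ℕ, v k ^ 2) := by
  have hf : Summable fun k : ℕ => u k * v k := by
    apply Summable.of_abs
    apply Summable.of_nonneg_of_le (fun k => abs_nonneg _) (fun k => ?_)
      ((hu.add hv).div_const 2)
    have h1 : |u k * v k| = |u k| * |v k| := abs_mul _ _
    nlinarith [sq_nonneg (|u k| - |v k|), sq_abs (u k), sq_abs (v k),
      abs_nonneg (u k), abs_nonneg (v k)]
  have key : ∀ s : Finset ℕ, (∑ i ∈ s, u i * v i) ^ 2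
      ≤ (∑' k : ℕ, u k ^ 2) * (∑' k : ℕ, v k ^ 2) := by
    intro s
    refine le_trans (Finset.sum_mul_sq_le_sq_mul_sq s u v) ?_
    exact mul_le_mul (Summable.sum_le_tsum s (fun i _ => sq_nonneg _) hu)
      (Summable.sum_le_tsum s (fun i _ => sq_nonneg _) hv)
      (Finset.sum_nonneg fun i _ => sq_nonneg _)
      (tsum_nonneg fun i => sq_nonneg _)
  have h2 : Filter.Tendsto (fun s : Finset ℕ => (∑ i ∈ s, u i * v i) ^ 2)
      Filter.atTop (nhds ((∑' k : ℕ, u k * v k) ^ 2)) := hf.hasSum.pow 2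
  exact le_of_tendsto h2 (Filter.Eventually.of_forall key)

/-- Orthogonal case (`σ = +1`), `0 < R ≤ 1/2`: the quadratic form
`B(c) = (∑* n² c_n²)/(∑* c_n² + σ(8R/π²)(∑* ((-1)^{(n-1)/2}/n) c_n)²)`
(sums over odd `n`, written `n = 2k+1`) satisfies `B(c) > 1/(1+R)` for every
nonzero admissible `c`, and its infimum is at most `1/(1 + 8R/π²)`. -/
theorem orthogonal_quadratic_form_bounds (R σ : ℝ) (hR : 0 < R) (hR' : R ≤ 1 / 2)
    (hσ : σ = 1)
    (B : (ℕ → ℝ) → ℝ)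
    (hB : ∀ c : ℕ → ℝ, B c =
      (∑' k : ℕ, ((2 * k + 1 : ℝ)) ^ 2 * (c k) ^ 2) /
      ((∑' k : ℕ, (c k) ^ 2) + σ * (8 * R / Real.pi ^ 2) *
        (∑' k : ℕ, ((-1 : ℝ) ^ k / (2 * k + 1)) * c k) ^ 2)) :
    (∀ c : ℕ → ℝ, c ≠ 0 →
        Summable (fun k : ℕ => ((2 * k + 1 : ℝ)) ^ 2 * (c k) ^ 2) →
        1 / (1 + R) < B c) ∧
    sInf {y : ℝ | ∃ c : ℕ → ℝ, c ≠ 0 ∧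
        Summable (fun k : ℕ => ((2 * k + 1 : ℝ)) ^ 2 * (c k) ^ 2) ∧ y = B c}
      ≤ 1 / (1 + 8 * R / Real.pi ^ 2) := by
  subst hσ
  have hπ : (0:ℝ) < Real.pi ^ 2 := by positivity
  have hπ2 : (74:ℝ)/9 < Real.pi ^ 2 := by nlinarith [Real.pi_gt_three]
  have part1 : ∀ c : ℕ → ℝ, c ≠ 0 →
      Summable (fun k : ℕ => ((2 * k + 1 : ℝ)) ^ 2 * (c k) ^ 2) →
      1 / (1 + R) < B c := by
    intro c hc hsumN
    set N := ∑' k : ℕ, ((2 * k + 1 : ℝ)) ^ 2 * (c k) ^ 2 with hNdef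
    set C := ∑' k : ℕ, (c k) ^ 2 with hCdef
    set S := ∑' k : ℕ, ((-1 : ℝ) ^ k / (2 * k + 1)) * c k with hSdef
    have hone : ∀ k : ℕ, (1:ℝ) ≤ (2 * (k:ℝ) + 1) ^ 2 := by
      intro k; nlinarith [Nat.cast_nonneg (α := ℝ) k]
    have hsumC : Summable fun k : ℕ => (c k) ^ 2 := by
      apply Summable.of_nonneg_of_le (fun k => sq_nonneg _) (fun k => ?_) hsumN
      nlinarith [sq_nonneg (c k), hone k]
    obtain ⟨k0, hk0⟩ := Function.ne_iff.mp hc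
    have hk0' : c k0 ≠ 0 := by simpa using hk0
    have hck0 : 0 < (c k0) ^ 2 := by positivity
    have hN : 0 < N := by
      refine lt_of_lt_of_le ?_ (Summable.le_tsum hsumN k0 (fun j _ => by positivity))
      nlinarith [hone k0]
    have hC : 0 < C :=
      lt_of_lt_of_le hck0 (Summable.le_tsum hsumC k0 (fun j _ => sq_nonneg _))
    have hCN : C ≤ N := by
      apply Summable.tsum_le_tsum (fun k => ?_) hsumC hsumN
      nlinarith [sq_nonneg (c k), hone k]
    -- Cauchy–Schwarz with u = (-1)^k/(2k+1)², v = (2k+1) c k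
    set u : ℕ → ℝ := fun k => (-1:ℝ) ^ k / (2 * k + 1) ^ 2 with hudef
    set v : ℕ → ℝ := fun k => (2 * (k:ℝ) + 1) * c k with hvdef
    have hu2 : (fun k : ℕ => u k ^ 2) = fun k : ℕ => (1:ℝ) / (2 * k + 1) ^ 4 := by
      funext k
      have h1 : ((-1:ℝ) ^ k) ^ 2 = 1 := by
        rw [← pow_mul, mul_comm, pow_mul]; norm_num
      rw [hudef]
      simp only []
      rw [div_pow, h1, ← pow_mul]
    have hv2 : (fun k : ℕ => v k ^ 2) = fun k : ℕ => ((2 * k + 1 : ℝ)) ^ 2 * (c k) ^ 2 := by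
      funext k; rw [hvdef]; push_cast; ring
    have hu2s : Summable fun k : ℕ => u k ^ 2 := by rw [hu2]; exact summable_inv_odd_pow4
    have hv2s : Summable fun k : ℕ => v k ^ 2 := by rw [hv2]; exact hsumN
    have huv : ∀ k : ℕ, u k * v k = ((-1 : ℝ) ^ k / (2 * k + 1)) * c k := by
      intro k
      have hne : (2 * (k:ℝ) + 1) ≠ 0 := by positivity
      rw [hudef, hvdef]
      field_simp
    have hSuv : S = ∑' k : ℕ, u k * v k := by
      rw [hSdef]; exact (tsum_congr huv).symm
    have hcs := tsum_cauchy_schwarz hu2s hv2s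
    rw [← hSuv, hu2, hv2] at hcs
    have hT := tsum_inv_odd_pow4_le
    have hSb : S ^ 2 ≤ 37/36 * N := by
      refine le_trans hcs ?_
      rw [← hNdef]
      exact mul_le_mul_of_nonneg_right hT hN.le
    -- conclude
    rw [hB c, ← hNdef, ← hCdef, ← hSdef, one_mul]
    have hD : 0 < C + 8 * R / Real.pi ^ 2 * S ^ 2 := by positivity
    rw [div_lt_div_iff₀ (by linarith) hD]
    have h8 : 8 * R / Real.pi ^ 2 * S ^ 2 ≤ 8 * R / Real.pi ^ 2 * (37/36 * N) :=
      mul_le_mul_of_nonneg_left hSb (by positivity)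
    have h9 : 8 * R / Real.pi ^ 2 * (37/36 * N) < R * N := by
      rw [div_mul_eq_mul_div, div_lt_iff₀ hπ]
      nlinarith [mul_pos hR hN]
    linarith
  refine ⟨part1, ?_⟩
  -- Part 2: test sequence c₀ = (1,0,0,…)
  set c0 : ℕ → ℝ := fun k => if k = 0 then 1 else 0 with hc0def
  have hc0 : c0 ≠ 0 := by
    intro h
    have := congrFun h 0
    simp [hc0def] at this
  have hsum0 : Summable fun k : ℕ => ((2 * k + 1 : ℝ)) ^ 2 * (c0 k) ^ 2 := by
    apply summable_of_ne_finset_zero (s := ({0} : Finset ℕ))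
    intro b hb
    simp only [Finset.mem_singleton] at hb
    simp [hc0def, hb]
  have hT1 : (∑' k : ℕ, ((2 * k + 1 : ℝ)) ^ 2 * (c0 k) ^ 2) = 1 := by
    have h := tsum_congr (L := SummationFilter.unconditional ℕ) (g := fun k : ℕ => if k = 0 then (1:ℝ) else 0)
      (f := fun k : ℕ => ((2 * k + 1 : ℝ)) ^ 2 * (c0 k) ^ 2)
      (fun k => by by_cases h : k = 0 <;> simp [hc0def, h])
    rw [h]; exact tsum_ite_eq 0 1
  have hT2 : (∑' k : ℕ, (c0 k) ^ 2) = 1 := by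
    have h := tsum_congr (L := SummationFilter.unconditional ℕ) (g := fun k : ℕ => if k = 0 then (1:ℝ) else 0)
      (f := fun k : ℕ => (c0 k) ^ 2)
      (fun k => by by_cases h : k = 0 <;> simp [hc0def, h])
    rw [h]; exact tsum_ite_eq 0 1
  have hT3 : (∑' k : ℕ, ((-1 : ℝ) ^ k / (2 * k + 1)) * c0 k) = 1 := by
    have h := tsum_congr (L := SummationFilter.unconditional ℕ) (g := fun k : ℕ => if k = 0 then (1:ℝ) else 0)
      (f := fun k : ℕ => ((-1 : ℝ) ^ k / (2 * k + 1)) * c0 k)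
      (fun k => by by_cases h : k = 0 <;> simp [hc0def, h])
    rw [h]; exact tsum_ite_eq 0 1
  have hBc0 : B c0 = 1 / (1 + 8 * R / Real.pi ^ 2) := by
    rw [hB c0, hT1, hT2, hT3]
    norm_num
  have hmem : B c0 ∈ {y : ℝ | ∃ c : ℕ → ℝ, c ≠ 0 ∧
      Summable (fun k : ℕ => ((2 * k + 1 : ℝ)) ^ 2 * (c k) ^ 2) ∧ y = B c} :=
    ⟨c0, hc0, hsum0, rfl⟩
  have hbdd : BddBelow {y : ℝ | ∃ c : ℕ → ℝ, c ≠ 0 ∧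
      Summable (fun k : ℕ => ((2 * k + 1 : ℝ)) ^ 2 * (c k) ^ 2) ∧ y = B c} := by
    refine ⟨1 / (1 + R), ?_⟩
    rintro y ⟨c, hc, hs, rfl⟩
    exact (part1 c hc hs).le
  calc sInf {y : ℝ | ∃ c : ℕ → ℝ, c ≠ 0 ∧
        Summable (fun k : ℕ => ((2 * k + 1 : ℝ)) ^ 2 * (c k) ^ 2) ∧ y = B c}
      ≤ B c0 := csInf_le hbdd hmem
    _ = 1 / (1 + 8 * R / Real.pi ^ 2) := hBc0
end

section
/- Let 0 < R < 1/2. For any nonzero square-summable sequence (c_n)_{n odd} (with ∑* n²c_n² < ∞), define B(c) = (∑* n² c_n²) / (∑* c_n² − (8R/π²)·(∑* ((−1)^{(n−1)/2}/n)·c_n)²), where ∑* runs over odd n ≥ 1. Then 1 < B(c) and the infimum of B is strictly less than 1/(1 − 8R/π²) < 2. -/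
open Real

private lemma tsum_cauchy_schwarz_s10 (f g : ℕ → ℝ) (hf : Summable fun k => f k ^ 2)
    (hg : Summable fun k => g k ^ 2) (hfg : Summable fun k => f k * g k) :
    (∑' k, f k * g k) ^ 2 ≤ (∑' k, f k ^ 2) * (∑' k, g k ^ 2) := by
  have key : ∀ n : ℕ, (∑ i ∈ Finset.range n, f i * g i) ^ 2 ≤
      (∑' k, f k ^ 2) * (∑' k, g k ^ 2) := by
    intro n
    calc (∑ i ∈ Finset.range n, f i * g i) ^ 2
        ≤ (∑ i ∈ Finset.range n, f i ^ 2) * (∑ i ∈ Finset.range n, g i ^ 2) :=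
          Finset.sum_mul_sq_le_sq_mul_sq _ _ _
      _ ≤ (∑' k, f k ^ 2) * (∑' k, g k ^ 2) := by
          apply mul_le_mul (Summable.sum_le_tsum _ (fun i _ => sq_nonneg _) hf)
            (Summable.sum_le_tsum _ (fun i _ => sq_nonneg _) hg)
            (Finset.sum_nonneg fun i _ => sq_nonneg _)
            (tsum_nonneg fun i => sq_nonneg _)
  have h1 : Filter.Tendsto (fun n => (∑ i ∈ Finset.range n, f i * g i) ^ 2)
      Filter.atTop (nhds ((∑' k, f k * g k) ^ 2)) :=
    (hfg.hasSum.tendsto_sum_nat).pow 2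
  exact le_of_tendsto h1 (Filter.Eventually.of_forall key)

set_option maxHeartbeats 2000000 in
/-- Symplectic case, `0 < R < 1/2`: the quadratic form
`B(c) = (∑* n² c_n²)/(∑* c_n² - (8R/π²)(∑* ((-1)^{(n-1)/2}/n) c_n)²)`
(sums over odd `n`, written `n = 2k+1`) satisfies `1 < B(c)` for every nonzero
admissible `c`, and its infimum is strictly less than
`1/(1 - 8R/π²)`, which is less than `2`. -/
theorem symplectic_quadratic_form_bounds (R : ℝ) (hR : 0 < R) (hR' : R < 1 / 2)
    (B : (ℕ → ℝ) → ℝ)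
    (hB : ∀ c : ℕ → ℝ, B c =
      (∑' k : ℕ, ((2 * k + 1 : ℝ)) ^ 2 * (c k) ^ 2) /
      ((∑' k : ℕ, (c k) ^ 2) - (8 * R / Real.pi ^ 2) *
        (∑' k : ℕ, ((-1 : ℝ) ^ k / (2 * k + 1)) * c k) ^ 2)) :
    (∀ c : ℕ → ℝ, c ≠ 0 →
        Summable (fun k : ℕ => ((2 * k + 1 : ℝ)) ^ 2 * (c k) ^ 2) →
        1 < B c) ∧
    sInf {y : ℝ | ∃ c : ℕ → ℝ, c ≠ 0 ∧
        Summable (fun k : ℕ => ((2 * k + 1 : ℝ)) ^ 2 * (c k) ^ 2) ∧ y = B c}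
      < 1 / (1 - 8 * R / Real.pi ^ 2) ∧
    1 / (1 - 8 * R / Real.pi ^ 2) < 2 := by
  have hπ : (3 : ℝ) < π := Real.pi_gt_three
  have hπ0 : (0 : ℝ) < π := by linarith
  have hπ2 : (9 : ℝ) < π ^ 2 := by nlinarith
  set D : ℝ := 8 * R / π ^ 2 with hDdef
  have hD0 : 0 < D := by positivity
  have hD2 : D < 1 / 2 := by
    rw [hDdef, div_lt_iff₀ (by positivity)]
    nlinarith
  -- Part 1: 1 < B c for all admissible nonzero c
  have part1 : ∀ c : ℕ → ℝ, c ≠ 0 →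
      Summable (fun k : ℕ => ((2 * k + 1 : ℝ)) ^ 2 * (c k) ^ 2) → 1 < B c := by
    intro c hc0 hc
    set a : ℕ → ℝ := fun k => (-1 : ℝ) ^ k / (2 * k + 1) with ha_def
    have hk1 : ∀ k : ℕ, (1 : ℝ) ≤ (2 * k + 1 : ℝ) := by
      intro k
      have : (0 : ℝ) ≤ (k : ℝ) := Nat.cast_nonneg k
      linarith
    have hS : Summable (fun k : ℕ => (c k) ^ 2) := by
      apply Summable.of_nonneg_of_le (fun k => sq_nonneg _) _ hc
      intro k
      have hkk : (1:ℝ) ≤ (2*(k:ℝ)+1)^2 := by nlinarith [(by positivity : (0:ℝ) ≤ (k:ℝ)), hk1 k]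
      nlinarith [sq_nonneg (c k), hkk]
    have ha2eq : ∀ k : ℕ, a k ^ 2 = 1 / (2 * (k : ℝ) + 1) ^ 2 := by
      intro k
      rw [ha_def]
      rw [div_pow]
      congr 1
      rcases Nat.even_or_odd k with h | h
      · rw [h.neg_one_pow]; norm_num
      · rw [h.neg_one_pow]; norm_num
    have hbasel : Summable (fun n : ℕ => (1 : ℝ) / (n : ℝ) ^ 2) := hasSum_zeta_two.summable
    have ha2 : Summable (fun k : ℕ => a k ^ 2) := by
      have h1 : Summable (fun k : ℕ => (1 : ℝ) / ((k : ℝ) + 1) ^ 2) := by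
        have := (summable_nat_add_iff 1).mpr hbasel
        simpa using this
      apply Summable.of_nonneg_of_le (fun k => sq_nonneg _) _ h1
      intro k
      rw [ha2eq k]
      have h1 : (0:ℝ) < ((k:ℝ)+1)^2 := by positivity
      have h2 : ((k:ℝ)+1)^2 ≤ (2*(k:ℝ)+1)^2 := by nlinarith [(by positivity : (0:ℝ) ≤ (k:ℝ))]
      exact one_div_le_one_div_of_le h1 h2
    have hac : Summable (fun k : ℕ => a k * c k) := by
      apply Summable.of_abs
      apply Summable.of_nonneg_of_le (fun k => abs_nonneg _)
        (f := fun k => (a k ^ 2 + c k ^ 2) / 2) _ ((ha2.add hS).div_const 2)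
      intro k
      rw [abs_mul]
      nlinarith [sq_nonneg (|a k| - |c k|), sq_abs (a k), sq_abs (c k), abs_nonneg (a k),
        abs_nonneg (c k)]
    have hA : (∑' k, a k ^ 2) ≤ π ^ 2 / 6 := by
      rw [← hasSum_zeta_two.tsum_eq]
      apply Summable.tsum_le_tsum_of_inj (fun k => 2 * k + 1)
        (fun x y h => by simp only at h; omega)
        (fun n _ => by positivity)
        _ ha2 hbasel
      intro k
      rw [ha2eq k]
      exact le_of_eq (by push_cast; ring)
    set S : ℝ := ∑' k, (c k) ^ 2 with hSdef
    set L : ℝ := ∑' k, a k * c k with hLdef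
    set N : ℝ := ∑' k : ℕ, ((2 * k + 1 : ℝ)) ^ 2 * (c k) ^ 2 with hNdef
    have hCS : L ^ 2 ≤ (∑' k, a k ^ 2) * S := tsum_cauchy_schwarz_s10 a c ha2 hS hac
    have hSpos : 0 < S := by
      obtain ⟨k, hk⟩ := Function.ne_iff.mp hc0
      have : (0 : ℝ) < c k ^ 2 := by
        rw [← sq_abs]; exact pow_pos (abs_pos.mpr hk) 2
      exact Summable.tsum_pos hS (fun i => sq_nonneg _) k this
    have hS0 : 0 ≤ S := le_of_lt hSpos
    have hL2 : L ^ 2 ≤ (π ^ 2 / 6) * S := le_trans hCS (by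
      apply mul_le_mul_of_nonneg_right hA hS0)
    have hDL : D * L ^ 2 ≤ (4 * R / 3) * S := by
      calc D * L ^ 2 ≤ D * ((π ^ 2 / 6) * S) := by
            apply mul_le_mul_of_nonneg_left hL2 (le_of_lt hD0)
        _ = (4 * R / 3) * S := by
            rw [hDdef]; field_simp; ring
    have hDenpos : 0 < S - D * L ^ 2 := by
      have : (4 * R / 3) * S < S := by nlinarith
      linarith
    have hNS : S ≤ N := by
      apply Summable.tsum_le_tsum _ hS hc
      intro k
      have hkk : (1:ℝ) ≤ (2*(k:ℝ)+1)^2 := by nlinarith [(by positivity : (0:ℝ) ≤ (k:ℝ)), hk1 k]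
      nlinarith [sq_nonneg (c k), hkk]
    have hNden : S - D * L ^ 2 < N := by
      rcases eq_or_ne L 0 with hL | hL
      · -- L = 0 : show S < N strictly
        have hex : ∃ k, k ≠ 0 ∧ c k ≠ 0 := by
          by_contra h
          push_neg at h
          have hc00 : c 0 ≠ 0 := by
            obtain ⟨k, hk⟩ := Function.ne_iff.mp hc0
            rcases eq_or_ne k 0 with rfl | hk0
            · simpa using hk
            · exact absurd (h k hk0) hk
          have : L = a 0 * c 0 := by
            rw [hLdef]
            apply tsum_eq_single
            intro b hb
            rw [h b hb, mul_zero]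
          rw [hL] at this
          have ha0 : a 0 = 1 := by simp [ha_def]
          rw [ha0, one_mul] at this
          exact hc00 this.symm
        obtain ⟨k, hk0, hk⟩ := hex
        have hle : (fun j : ℕ => c j ^ 2) ≤ (fun j : ℕ => ((2 * j + 1 : ℝ)) ^ 2 * c j ^ 2) := by
          intro i
          have hkk : (1:ℝ) ≤ (2*(i:ℝ)+1)^2 := by
            nlinarith [(by positivity : (0:ℝ) ≤ (i:ℝ)), hk1 i]
          simp only
          nlinarith [sq_nonneg (c i), hkk]
        have hik : c k ^ 2 < ((2 * k + 1 : ℝ)) ^ 2 * c k ^ 2 := by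
          have h2 : (1 : ℝ) < (2 * k + 1 : ℝ) := by
            have : (1 : ℝ) ≤ (k : ℝ) := by exact_mod_cast Nat.one_le_iff_ne_zero.mpr hk0
            linarith
          have h3 : (0 : ℝ) < c k ^ 2 := by
            rw [← sq_abs]; exact pow_pos (abs_pos.mpr hk) 2
          nlinarith [mul_pos (show (0:ℝ) < (2*(k:ℝ)+1)^2 - 1 by nlinarith) h3]
        have hlt : S < N := by
          rw [hSdef, hNdef]
          exact Summable.tsum_lt_tsum hle hik hS hc
        rw [hL]
        simpa using hlt
      · have : 0 < D * L ^ 2 := by positivity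
        linarith
    rw [hB c, ← hSdef, ← hLdef, ← hNdef]
    rw [lt_div_iff₀ hDenpos, one_mul]
    exact hNden
  refine ⟨part1, ?_, ?_⟩
  · -- infimum strictly less than 1/(1-D)
    set s : ℝ := D / 20 with hsdef
    have hs0 : 0 < s := by positivity
    have hs1 : s < 1 := by rw [hsdef]; linarith
    set c₀ : ℕ → ℝ := fun k => if k = 0 then 1 else if k = 1 then s else 0 with hc₀def
    have hc₀0 : c₀ ≠ 0 := by
      intro h
      have : c₀ 0 = 0 := by rw [h]; rfl
      simp [hc₀def] at this
    have hsupp : ∀ (f : ℕ → ℝ) (b : ℕ), b ∉ ({0, 1} : Finset ℕ) → f b * c₀ b ^ 2 = 0 := by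
      intro f b hb
      simp only [Finset.mem_insert, Finset.mem_singleton] at hb
      push_neg at hb
      simp [hc₀def, hb.1, hb.2]
    have hsum₀ : Summable (fun k : ℕ => ((2 * k + 1 : ℝ)) ^ 2 * (c₀ k) ^ 2) :=
      summable_of_ne_finset_zero (s := {0, 1}) (fun b hb => hsupp (fun b : ℕ => ((2 * b + 1 : ℝ)) ^ 2) b hb)
    have h01 : (0 : ℕ) ∉ ({1} : Finset ℕ) := by norm_num
    have tsum_two : ∀ f : ℕ → ℝ, (∀ b ∉ ({0, 1} : Finset ℕ), f b = 0) →
        (∑' k, f k) = f 0 + f 1 := by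
      intro f hf
      rw [tsum_eq_sum (s := {0, 1}) hf, Finset.sum_insert h01, Finset.sum_singleton]
    have hN₀ : (∑' k : ℕ, ((2 * k + 1 : ℝ)) ^ 2 * (c₀ k) ^ 2) = 1 + 9 * s ^ 2 := by
      rw [tsum_two _ (fun b hb => hsupp (fun b : ℕ => ((2 * b + 1 : ℝ)) ^ 2) b hb)]
      simp [hc₀def]
      norm_num
    have hS₀ : (∑' k : ℕ, (c₀ k) ^ 2) = 1 + s ^ 2 := by
      have : (∑' k : ℕ, (c₀ k) ^ 2) = c₀ 0 ^ 2 + c₀ 1 ^ 2 := by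
        apply tsum_two
        intro b hb
        simp only [Finset.mem_insert, Finset.mem_singleton] at hb
        push_neg at hb
        simp [hc₀def, hb.1, hb.2]
      rw [this]
      simp [hc₀def]
    have hL₀ : (∑' k : ℕ, ((-1 : ℝ) ^ k / (2 * k + 1)) * c₀ k) = 1 - s / 3 := by
      have : (∑' k : ℕ, ((-1 : ℝ) ^ k / (2 * k + 1)) * c₀ k) =
          ((-1 : ℝ) ^ (0:ℕ) / (2 * (0:ℕ) + 1)) * c₀ 0 +
          ((-1 : ℝ) ^ (1:ℕ) / (2 * (1:ℕ) + 1)) * c₀ 1 := by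
        apply tsum_two
        intro b hb
        simp only [Finset.mem_insert, Finset.mem_singleton] at hb
        push_neg at hb
        simp [hc₀def, hb.1, hb.2]
      rw [this]
      simp [hc₀def]
      ring
    have hDen₀pos : 0 < 1 + s ^ 2 - D * (1 - s / 3) ^ 2 := by nlinarith
    have hBc₀ : B c₀ = (1 + 9 * s ^ 2) / (1 + s ^ 2 - D * (1 - s / 3) ^ 2) := by
      rw [hB c₀, hN₀, hS₀, hL₀]
    have h1D : 0 < 1 - D := by linarith
    have hkey : B c₀ < 1 / (1 - D) := by
      rw [hBc₀, div_lt_div_iff₀ hDen₀pos h1D, one_mul]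
      have hs' : s = D / 20 := hsdef
      nlinarith [sq_nonneg s, sq_nonneg D, mul_pos hD0 hs0]
    have hmem : B c₀ ∈ {y : ℝ | ∃ c : ℕ → ℝ, c ≠ 0 ∧
        Summable (fun k : ℕ => ((2 * k + 1 : ℝ)) ^ 2 * (c k) ^ 2) ∧ y = B c} :=
      ⟨c₀, hc₀0, hsum₀, rfl⟩
    have hbdd : BddBelow {y : ℝ | ∃ c : ℕ → ℝ, c ≠ 0 ∧
        Summable (fun k : ℕ => ((2 * k + 1 : ℝ)) ^ 2 * (c k) ^ 2) ∧ y = B c} := by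
      refine ⟨1, ?_⟩
      rintro y ⟨c, hc1, hc2, rfl⟩
      exact le_of_lt (part1 c hc1 hc2)
    calc sInf {y : ℝ | ∃ c : ℕ → ℝ, c ≠ 0 ∧
        Summable (fun k : ℕ => ((2 * k + 1 : ℝ)) ^ 2 * (c k) ^ 2) ∧ y = B c}
        ≤ B c₀ := csInf_le hbdd hmem
      _ < 1 / (1 - D) := hkey
  · have h1D : 0 < 1 - D := by linarith
    rw [div_lt_iff₀ h1D]
    linarith
end

section
/- Let λ ∈ ℝ and n ≥ 1. If the operators D (derivative), T (shift by +1), T^{−1} (shift by −1) act on the exponential e_λ(u) = e^{iλu}, then for the operator Q_k defined recursively by Q_1 = I, Q_2 = D + (δ/2)(T^{−1} − T), Q_{k+1} = D Q_k + (1/4) Q_{k−1} + (δ/2)^k (T^{−k} + (−1)^k T^k), restricted to functions supported so that positive shifts vanish, one has Q_n[e_λ] = (i/2)^{n−1} ∑_{j=0}^{n−1} (δ/i)^j U_{n−1−j}(λ) T^{−j}[e_λ], with δ² = 1. -/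
open Complex Finset

private lemma hasDerivAt_expSum (lam : ℝ) (a : ℕ → ℂ) (m : ℕ) (u : ℝ) :
    HasDerivAt (fun u : ℝ => ∑ j ∈ Finset.range m, a j * Complex.exp (Complex.I * lam * (u - j)))
      (Complex.I * lam * ∑ j ∈ Finset.range m, a j * Complex.exp (Complex.I * lam * (u - j))) u := by
  rw [Finset.mul_sum]
  apply HasDerivAt.fun_sum
  intro j _
  have h0 : HasDerivAt (fun x : ℝ => (x : ℂ)) 1 u := by
    simpa using (hasDerivAt_id u).ofReal_comp
  have h1 : HasDerivAt (fun x : ℝ => Complex.I * lam * ((x : ℂ) - (j : ℂ)))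
      (Complex.I * lam) u := by
    simpa using ((h0.sub_const (j : ℂ)).const_mul (Complex.I * lam))
  have h2 := (h1.cexp).const_mul (a j)
  have hc : ∀ x : ℝ, Complex.I * lam * ((x : ℂ) - (j : ℂ)) = Complex.I * lam * ((x : ℝ) - (j : ℕ) : ℝ) := by
    intro x; push_cast; ring
  simp only [hc] at h2
  convert h2 using 1
  · rfl
  · funext y; congr 1; push_cast; ring
  · rw [hc]; ring

private lemma chebU_eval_rec (n : ℤ) (x : ℂ) :
    (Polynomial.Chebyshev.U ℂ (n + 2)).eval x
      = 2 * x * (Polynomial.Chebyshev.U ℂ (n + 1)).eval x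
        - (Polynomial.Chebyshev.U ℂ n).eval x := by
  rw [Polynomial.Chebyshev.U_add_two]
  simp

/-- With vanishing positive shifts, the recursively defined operators `Q_k`
(`Q_1 = I`, `Q_2 = D + (δ/2)T⁻¹`, `Q_{k+1} = D Q_k + (1/4) Q_{k-1} + (δ/2)^k T^{-k}`)
applied to the exponential `e_λ(u) = e^{iλu}` satisfy
`Q_n[e_λ] = (i/2)^{n-1} ∑_{j=0}^{n-1} (δ/i)^j U_{n-1-j}(λ) T^{-j}[e_λ]`. -/
theorem Q_on_exponential (n : ℕ) (hn : 1 ≤ n) (lam : ℝ) (δ : ℂ) (hδ : δ ^ 2 = 1)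
    (Q : ℕ → (ℝ → ℂ) → (ℝ → ℂ))
    (hQ1 : ∀ f : ℝ → ℂ, Q 1 f = f)
    (hQ2 : ∀ f : ℝ → ℂ, ∀ u : ℝ, Q 2 f u = deriv f u + (δ / 2) * f (u - 1))
    (hQrec : ∀ k : ℕ, 2 ≤ k → ∀ f : ℝ → ℂ, ∀ u : ℝ,
      Q (k + 1) f u = deriv (Q k f) u + (1 / 4) * Q (k - 1) f u
        + (δ / 2) ^ k * f (u - k)) :
    ∀ u : ℝ, Q n (fun v : ℝ => Complex.exp (Complex.I * lam * v)) u
      = (Complex.I / 2) ^ (n - 1) *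
        ∑ j ∈ Finset.range n, (δ / Complex.I) ^ j *
          ((Polynomial.Chebyshev.U ℂ ((n : ℤ) - 1 - j)).eval (lam : ℂ)) *
          Complex.exp (Complex.I * lam * (u - j)) := by
  induction n using Nat.strong_induction_on with
  | _ n ih =>
  set e : ℝ → ℂ := fun v : ℝ => Complex.exp (Complex.I * lam * v) with he
  intro u
  match n, hn with
  | 1, _ =>
    rw [hQ1]
    simp [Polynomial.Chebyshev.U_zero, he]
  | 2, _ =>
    rw [hQ2]
    have hd : deriv e u = Complex.I * lam * e u := by
      have h0 : HasDerivAt (fun x : ℝ => (x : ℂ)) 1 u := by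
        simpa using (hasDerivAt_id u).ofReal_comp
      have h1 : HasDerivAt (fun x : ℝ => Complex.I * lam * (x : ℂ)) (Complex.I * lam) u := by
        simpa using h0.const_mul (Complex.I * lam)
      have := h1.cexp
      rw [this.deriv]; ring
    have h1 : ((2 : ℕ) : ℤ) - 1 - ((0 : ℕ) : ℤ) = 1 := by norm_num
    have h2 : ((2 : ℕ) : ℤ) - 1 - ((1 : ℕ) : ℤ) = 0 := by norm_num
    rw [hd, Finset.sum_range_succ, Finset.sum_range_one, h1, h2,
      Polynomial.Chebyshev.U_one, Polynomial.Chebyshev.U_zero]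
    have hA : (Complex.I / 2) * (δ / Complex.I) = δ / 2 := by
      rw [div_mul_div_comm, mul_comm Complex.I δ, mul_div_mul_right _ _ Complex.I_ne_zero]
    simp only [Polynomial.eval_one, Polynomial.eval_mul, Polynomial.eval_ofNat,
      Polynomial.eval_X, pow_zero, pow_one, one_mul, mul_one, he]
    push_cast
    simp only [sub_zero]
    linear_combination (-Complex.exp (Complex.I * lam * ((u : ℂ) - 1))) * hA
  | (k + 3), _ =>
    have hs1 : k + 2 - 1 = k + 1 := rfl
    have hs2 : k + 1 - 1 = k := rfl
    have hrec := hQrec (k + 2) (by omega) e u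
    rw [hs1] at hrec
    have IH2 := ih (k + 2) (by omega) (by omega)
    have IH1 := ih (k + 1) (by omega) (by omega)
    rw [hs1] at IH2
    simp only [hs2] at IH1
    have hfun : Q (k + 2) e = fun u : ℝ =>
        ∑ j ∈ Finset.range (k + 2),
          ((Complex.I / 2) ^ (k + 1) * ((δ / Complex.I) ^ j *
            ((Polynomial.Chebyshev.U ℂ (((k + 2 : ℕ) : ℤ) - 1 - j)).eval (lam : ℂ)))) *
          Complex.exp (Complex.I * lam * (u - j)) := by
      funext v
      rw [IH2 v, Finset.mul_sum]
      exact Finset.sum_congr rfl fun j _ => by ring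
    have hd : deriv (Q (k + 2) e) u = Complex.I * lam *
        ((Complex.I / 2) ^ (k + 1) * ∑ j ∈ Finset.range (k + 2),
          (δ / Complex.I) ^ j *
            ((Polynomial.Chebyshev.U ℂ (((k + 2 : ℕ) : ℤ) - 1 - j)).eval (lam : ℂ)) *
          Complex.exp (Complex.I * lam * (u - j))) := by
      rw [hfun, (hasDerivAt_expSum lam _ (k + 2) u).deriv]
      congr 1
      rw [Finset.mul_sum]
      exact Finset.sum_congr rfl fun j _ => by ring
    show Q ((k + 2) + 1) e u = _
    rw [hrec, hd, IH1 u]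
    -- extend the (k+1)-sum to a (k+2)-sum (the new term vanishes via U(-1) = 0)
    have hext : ∑ j ∈ Finset.range (k + 1), (δ / Complex.I) ^ j *
          ((Polynomial.Chebyshev.U ℂ (((k + 1 : ℕ) : ℤ) - 1 - j)).eval (lam : ℂ)) *
          Complex.exp (Complex.I * lam * (u - j))
        = ∑ j ∈ Finset.range (k + 2), (δ / Complex.I) ^ j *
          ((Polynomial.Chebyshev.U ℂ (((k + 1 : ℕ) : ℤ) - 1 - j)).eval (lam : ℂ)) *
          Complex.exp (Complex.I * lam * (u - j)) := by
      rw [Finset.sum_range_succ (n := k + 1)]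
      have hidx : ((k + 1 : ℕ) : ℤ) - 1 - ((k + 1 : ℕ) : ℤ) = -1 := by push_cast; ring
      rw [hidx, Polynomial.Chebyshev.U_neg_one]
      simp
    rw [hext]
    rw [Finset.sum_range_succ (n := k + 2)]
    have hidx2 : ((k + 3 : ℕ) : ℤ) - 1 - ((k + 2 : ℕ) : ℤ) = 0 := by push_cast; ring
    rw [hidx2, Polynomial.Chebyshev.U_zero]
    have hkey : ∀ j ∈ Finset.range (k + 2),
        Complex.I * lam * ((Complex.I / 2) ^ (k + 1) * ((δ / Complex.I) ^ j *
            ((Polynomial.Chebyshev.U ℂ (((k + 2 : ℕ) : ℤ) - 1 - j)).eval (lam : ℂ)) *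
            Complex.exp (Complex.I * lam * (u - j))))
        + 1 / 4 * ((Complex.I / 2) ^ k * ((δ / Complex.I) ^ j *
            ((Polynomial.Chebyshev.U ℂ (((k + 1 : ℕ) : ℤ) - 1 - j)).eval (lam : ℂ)) *
            Complex.exp (Complex.I * lam * (u - j))))
        = (Complex.I / 2) ^ (k + 2) * ((δ / Complex.I) ^ j *
            ((Polynomial.Chebyshev.U ℂ (((k + 3 : ℕ) : ℤ) - 1 - j)).eval (lam : ℂ)) *
            Complex.exp (Complex.I * lam * (u - j))) := by
      intro j _
      have e1 : ((k + 2 : ℕ) : ℤ) - 1 - (j : ℤ) = ((k : ℤ) - j) + 1 := by push_cast; ring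
      have e2 : ((k + 1 : ℕ) : ℤ) - 1 - (j : ℤ) = (k : ℤ) - j := by push_cast; ring
      have e3 : ((k + 3 : ℕ) : ℤ) - 1 - (j : ℤ) = ((k : ℤ) - j) + 2 := by push_cast; ring
      rw [e1, e2, e3, chebU_eval_rec]
      linear_combination ((δ / Complex.I) ^ j *
        ((Polynomial.Chebyshev.U ℂ ((k : ℤ) - j)).eval (lam : ℂ)) *
        Complex.exp (Complex.I * lam * (u - j)) * (Complex.I / 2) ^ k / 4) * Complex.I_sq
    have hsum : Complex.I * lam * ((Complex.I / 2) ^ (k + 1) * ∑ j ∈ Finset.range (k + 2),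
          (δ / Complex.I) ^ j *
            ((Polynomial.Chebyshev.U ℂ (((k + 2 : ℕ) : ℤ) - 1 - j)).eval (lam : ℂ)) *
          Complex.exp (Complex.I * lam * (u - j)))
        + 1 / 4 * ((Complex.I / 2) ^ k * ∑ j ∈ Finset.range (k + 2),
          (δ / Complex.I) ^ j *
            ((Polynomial.Chebyshev.U ℂ (((k + 1 : ℕ) : ℤ) - 1 - j)).eval (lam : ℂ)) *
          Complex.exp (Complex.I * lam * (u - j)))
        = (Complex.I / 2) ^ (k + 2) * ∑ j ∈ Finset.range (k + 2),
          (δ / Complex.I) ^ j *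
            ((Polynomial.Chebyshev.U ℂ (((k + 3 : ℕ) : ℤ) - 1 - j)).eval (lam : ℂ)) *
          Complex.exp (Complex.I * lam * (u - j)) := by
      simp only [Finset.mul_sum]
      rw [← Finset.sum_add_distrib]
      exact Finset.sum_congr rfl hkey
    have htail : (δ / 2) ^ (k + 2) * e (u - ((k + 2 : ℕ) : ℝ))
        = (Complex.I / 2) ^ (k + 2) * ((δ / Complex.I) ^ (k + 2) * Polynomial.eval (lam : ℂ) 1 *
            Complex.exp (Complex.I * lam * ((u : ℂ) - ((k + 2 : ℕ) : ℂ)))) := by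
      have hA : (Complex.I / 2) ^ (k + 2) * (δ / Complex.I) ^ (k + 2) = (δ / 2) ^ (k + 2) := by
        rw [← mul_pow, div_mul_div_comm, mul_comm Complex.I δ,
          mul_div_mul_right _ _ Complex.I_ne_zero]
      simp only [Polynomial.eval_one, mul_one, he]
      push_cast
      rw [← mul_assoc, hA]
    rw [show k + 3 - 1 = k + 2 from rfl]
    linear_combination hsum + htail
end
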